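/- arXiv:1301.3784 — 5 statements merged into one kernel-verified Lean document; each statement's English description precedes it below -/
import Mathlib

section
/- Let A be an n×n row-stochastic matrix with all entries A_{i,j} ≥ α for some α ≥ 0. Then for every x ∈ ℝ^n, ‖Ax‖ ≤ (1 − nα)·‖x‖, where ‖·‖ denotes the seminorm measuring sup-norm distance to the span of the all-ones vector. Hence the induced matrix seminorm of A is at most 1 − nα. -/
open Matrix Filter

/-- Row-stochastic matrix: nonnegative entries and row sums equal to 1. -/
def Stochastic {n : ℕ} (A : Matrix (Fin n) (Fin n) ℝ) : Prop :=
  (∀ i j, 0 ≤ A i j) ∧ ∀ i, ∑ j, A i j = 1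

/-- There is a walk of length `k` from `i` to `j` in the digraph with edge relation `E`. -/
def HasWalk {n : ℕ} (E : Fin n → Fin n → Prop) (i j : Fin n) (k : ℕ) : Prop :=
  ∃ f : ℕ → Fin n, f 0 = i ∧ f k = j ∧ ∀ m < k, E (f m) (f (m + 1))

/-- The gcd of the lengths of closed walks at `i` (which all stay inside the strongly
connected component of `i`) is 1.  Equivalently, the component of `i` is aperiodic. -/
def AperiodicAt {n : ℕ} (E : Fin n → Fin n → Prop) (i : Fin n) : Prop :=
  ∀ d : ℕ, (∀ k, 0 < k → HasWalk E i i k → d ∣ k) → d = 1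

/-- `backProd A l m = A (l+m) ⬝ A (l+m-1) ⬝ ⋯ ⬝ A (l+1)`, so that
`backProd A l (k-l)` is the partial product `P(k,l)` and `backProd A 0 k = P(k)`. -/
def backProd {n : ℕ} (A : ℕ → Matrix (Fin n) (Fin n) ℝ) (l : ℕ) : ℕ → Matrix (Fin n) (Fin n) ℝ
  | 0 => 1
  | m + 1 => A (l + m + 1) * backProd A l m

/-- Vector seminorm: sup-norm distance to the line spanned by the all-ones vector. -/
noncomputable def sn {n : ℕ} (x : Fin n → ℝ) : ℝ :=
  ⨅ c : ℝ, ‖x - Function.const (Fin n) c‖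

/-- Induced matrix seminorm `‖A‖ = sup { ‖Ax‖/‖x‖ : ‖x‖ ≠ 0 }`. -/
noncomputable def msn {n : ℕ} (A : Matrix (Fin n) (Fin n) ℝ) : ℝ :=
  sSup {r : ℝ | ∃ x : Fin n → ℝ, sn x ≠ 0 ∧ r = sn (A.mulVec x) / sn x}

/-- `mu P j` = minimum of the positive entries of column `j` of `P`. -/
noncomputable def mu {n : ℕ} (P : Matrix (Fin n) (Fin n) ℝ) (j : Fin n) : ℝ :=
  sInf {v : ℝ | ∃ i, 0 < P i j ∧ P i j = v}

/-- Completely reducible: whenever `A i j > 0` there is a directed walk from `j`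
back to `i` in `G(A)`; i.e. no edges between distinct strongly connected components. -/
def CompRed {n : ℕ} (A : Matrix (Fin n) (Fin n) ℝ) : Prop :=
  ∀ i j, 0 < A i j → ∃ k, HasWalk (fun a b => 0 < A a b) j i k

lemma sn_nonneg' {n : ℕ} (x : Fin n → ℝ) : 0 ≤ sn x :=
  Real.iInf_nonneg fun _ => norm_nonneg _

lemma sn_le_half_osc' {n : ℕ} [Nonempty (Fin n)] (x : Fin n → ℝ) :
    2 * sn x ≤ Finset.univ.sup' Finset.univ_nonempty x
      - Finset.univ.inf' Finset.univ_nonempty x := by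
  set M := Finset.univ.sup' Finset.univ_nonempty x with hM
  set m := Finset.univ.inf' Finset.univ_nonempty x with hm
  have hmM : m ≤ M := by
    obtain ⟨i⟩ := ‹Nonempty (Fin n)›
    exact le_trans (Finset.inf'_le _ (Finset.mem_univ i)) (Finset.le_sup' _ (Finset.mem_univ i))
  have hb : BddBelow (Set.range fun c : ℝ => ‖x - Function.const (Fin n) c‖) := by
    refine ⟨0, ?_⟩
    rintro r ⟨c, rfl⟩
    exact norm_nonneg _
  have h1 : sn x ≤ ‖x - Function.const (Fin n) ((M + m) / 2)‖ := ciInf_le hb _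
  have h2 : ‖x - Function.const (Fin n) ((M + m) / 2)‖ ≤ (M - m) / 2 := by
    rw [pi_norm_le_iff_of_nonneg (by linarith)]
    intro i
    have hle : x i ≤ M := Finset.le_sup' _ (Finset.mem_univ i)
    have hge : m ≤ x i := Finset.inf'_le _ (Finset.mem_univ i)
    rw [Pi.sub_apply, Function.const_apply, Real.norm_eq_abs, abs_le]
    constructor <;> linarith
  linarith

lemma half_osc_le_sn' {n : ℕ} [Nonempty (Fin n)] (x : Fin n → ℝ) :
    Finset.univ.sup' Finset.univ_nonempty x
      - Finset.univ.inf' Finset.univ_nonempty x ≤ 2 * sn x := by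
  obtain ⟨iM, -, hiM⟩ := Finset.exists_mem_eq_sup' Finset.univ_nonempty x
  obtain ⟨im, -, him⟩ := Finset.exists_mem_eq_inf' Finset.univ_nonempty x
  rw [hiM, him]
  have : (x iM - x im) / 2 ≤ sn x := by
    apply le_ciInf
    intro c
    have h1 : |x iM - c| ≤ ‖x - Function.const (Fin n) c‖ := by
      simpa using norm_le_pi_norm (x - Function.const (Fin n) c) iM
    have h2 : |x im - c| ≤ ‖x - Function.const (Fin n) c‖ := by
      simpa using norm_le_pi_norm (x - Function.const (Fin n) c) im
    have ha : x iM - c ≤ |x iM - c| := le_abs_self _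
    have hb : -(x im - c) ≤ |x im - c| := neg_le_abs _
    linarith
  linarith

theorem stmt4 {n : ℕ} (A : Matrix (Fin n) (Fin n) ℝ) (hA : Stochastic A)
    (α : ℝ) (hα : 0 ≤ α) (hent : ∀ i j, α ≤ A i j) :
    (∀ x : Fin n → ℝ, sn (A.mulVec x) ≤ (1 - n * α) * sn x) ∧
    msn A ≤ 1 - n * α := by
  have hsum1 : 0 ≤ 1 - (n : ℝ) * α := by
    rcases Nat.eq_zero_or_pos n with h | h
    · simp [h]
    · have i : Fin n := ⟨0, h⟩
      have h2 : (n : ℝ) * α ≤ ∑ j, A i j := by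
        calc (n : ℝ) * α = ∑ _j : Fin n, α := by simp [mul_comm]
          _ ≤ ∑ j, A i j := Finset.sum_le_sum fun j _ => hent i j
      linarith [hA.2 i]
  have main : ∀ x : Fin n → ℝ, sn (A.mulVec x) ≤ (1 - n * α) * sn x := by
    intro x
    rcases Nat.eq_zero_or_pos n with h | h
    · subst h
      have hz : ∀ y : Fin 0 → ℝ, sn y = 0 := by
        intro y
        have hc : ∀ c : ℝ, ‖y - Function.const (Fin 0) c‖ = 0 := fun c => by
          rw [Subsingleton.elim (y - Function.const (Fin 0) c) 0]; simp
        unfold sn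
        simp only [hc, ciInf_const]
      simp [hz]
    · have : Nonempty (Fin n) := ⟨⟨0, h⟩⟩
      set M := Finset.univ.sup' Finset.univ_nonempty x with hMdef
      set m := Finset.univ.inf' Finset.univ_nonempty x with hmdef
      have hsub : ∀ i, ∑ j, (A i j - α) = 1 - n * α := by
        intro i
        rw [Finset.sum_sub_distrib, hA.2 i]
        simp [mul_comm]
      have hup : ∀ i, ∑ j, (A i j - α) * x j ≤ (1 - n * α) * M := by
        intro i
        calc ∑ j, (A i j - α) * x j ≤ ∑ j, (A i j - α) * M :=
              Finset.sum_le_sum fun j _ => mul_le_mul_of_nonneg_left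
                (Finset.le_sup' _ (Finset.mem_univ j)) (by linarith [hent i j])
          _ = (1 - n * α) * M := by rw [← Finset.sum_mul, hsub i]
      have hlo : ∀ i, (1 - n * α) * m ≤ ∑ j, (A i j - α) * x j := by
        intro i
        calc (1 - n * α) * m = ∑ j, (A i j - α) * m := by rw [← Finset.sum_mul, hsub i]
          _ ≤ ∑ j, (A i j - α) * x j :=
              Finset.sum_le_sum fun j _ => mul_le_mul_of_nonneg_left
                (Finset.inf'_le _ (Finset.mem_univ j)) (by linarith [hent i j])
      have hmv : ∀ i, A.mulVec x i = ∑ j, (A i j - α) * x j + α * ∑ j, x j := by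
        intro i
        simp [Matrix.mulVec, dotProduct, sub_mul, Finset.sum_sub_distrib,
          Finset.mul_sum]
      have hosc : ∀ i k, A.mulVec x i - A.mulVec x k ≤ (1 - n * α) * (M - m) := by
        intro i k
        rw [hmv i, hmv k]
        nlinarith [hup i, hlo k]
      obtain ⟨iM, -, hiM⟩ := Finset.exists_mem_eq_sup' Finset.univ_nonempty (A.mulVec x)
      obtain ⟨im, -, him⟩ := Finset.exists_mem_eq_inf' Finset.univ_nonempty (A.mulVec x)
      have h1 : 2 * sn (A.mulVec x) ≤ A.mulVec x iM - A.mulVec x im := by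
        have h := sn_le_half_osc' (A.mulVec x)
        rw [hiM, him] at h
        exact h
      have h2 : M - m ≤ 2 * sn x := half_osc_le_sn' x
      have h3 : (1 - n * α) * (M - m) ≤ (1 - n * α) * (2 * sn x) :=
        mul_le_mul_of_nonneg_left h2 hsum1
      have h4 := hosc iM im
      linarith
  refine ⟨main, ?_⟩
  apply Real.sSup_le
  · rintro r ⟨x, hx, rfl⟩
    have hxpos : 0 < sn x := lt_of_le_of_ne (sn_nonneg' x) (Ne.symm hx)
    rw [div_le_iff₀ hxpos]
    exact main x
  · exact hsum1
end

section
/- Let G be a strongly connected aperiodic digraph on n ≥ 1 nodes (allowing loops). Then for any two nodes i and j and any integer k ≥ n² − 2n + 2, there exists a walk in G from i to j of length exactly k. -/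
/-!
Wielandt's argument. Let `s` be the length of a shortest cycle. Unless `n = 1`, aperiodicity
forces `s < n`: a shortest cycle through all `n` vertices has no chords, so every closed walk
would have length divisible by `n`. From `i`, a shortest walk to the cycle has length `d` with
`d + s ≤ n`; continuing around the cycle adjusts its length to `d + u ≤ n - 1` with
`d + u ≡ k [MOD s]`. At the vertex `v` reached this way, the graph of walks of length `s` has a
loop, and by aperiodicity `v` reaches every `j` in it, hence in fewer than `n` steps, and after
padding with the loop in exactly `L` steps for every `L ≥ n - 1`. The bound
`k ≥ n² - 2n + 2` is what guarantees `(k - d - u) / s ≥ n - 1`.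
-/

open Matrix Filter

namespace HasWalk

variable {n : ℕ} {R : Fin n → Fin n → Prop} {x y z : Fin n} {a b m : ℕ}

theorem refl (R : Fin n → Fin n → Prop) (x : Fin n) : HasWalk R x x 0 :=
  ⟨fun _ => x, rfl, rfl, by simp⟩

theorem single (h : R x y) : HasWalk R x y 1 :=
  ⟨fun m => if m = 0 then x else y, rfl, rfl,
    fun m hm => by simpa [Nat.lt_one_iff.mp hm] using h⟩

theorem trans (h₁ : HasWalk R x y a) (h₂ : HasWalk R y z b) : HasWalk R x z (a + b) := by
  obtain ⟨f, rfl, rfl, hf⟩ := h₁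
  obtain ⟨g, hg, rfl, hg'⟩ := h₂
  refine ⟨fun m => if m ≤ a then f m else g (m - a), by simp, ?_, fun m hm => ?_⟩
  · rcases Nat.eq_zero_or_pos b with rfl | hb
    · simp [hg]
    · simp [show ¬ a + b ≤ a by omega]
  · rcases lt_trichotomy m a with h | rfl | h
    · simpa [h.le, Nat.succ_le_of_lt h] using hf m h
    · simpa [hg] using hg' 0 (by omega)
    · simpa [h.not_ge, show ¬ m + 1 ≤ a by omega, Nat.sub_add_comm h.le]
        using hg' (m - a) (by omega)

theorem of_forall_lt {f : ℕ → Fin n} (hf : ∀ x < m, R (f x) (f (x + 1))) (hab : a ≤ b)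
    (hbm : b ≤ m) : HasWalk R (f a) (f b) (b - a) :=
  ⟨fun x => f (a + x), rfl, by simp only [Nat.add_sub_cancel' hab], fun x hx => hf _ (by omega)⟩

theorem of_forall {F : ℕ → Fin n} (hF : ∀ m, R (F m) (F (m + 1))) (a u : ℕ) :
    HasWalk R (F a) (F (a + u)) u := by
  simpa using of_forall_lt (m := a + u) (fun x _ => hF x) (Nat.le_add_right a u) le_rfl

theorem of_loop (h : R x x) : ∀ c, HasWalk R x x c
  | 0 => refl R x
  | c + 1 => (of_loop h c).trans (single h)

theorem of_forall_lt_of_eq {f : ℕ → Fin n} (hf : ∀ x < m, R (f x) (f (x + 1))) (hab : a < b)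
    (hbm : b ≤ m) (heq : f a = f b) : HasWalk R (f 0) (f m) (m - (b - a)) := by
  have h := (of_forall_lt hf (Nat.zero_le a) (hab.le.trans hbm)).trans
    (heq ▸ of_forall_lt hf hbm le_rfl)
  rwa [show a - 0 + (m - b) = m - (b - a) by omega] at h

theorem injOn_of_forall_lt {f : ℕ → Fin n} (hf : ∀ x < m, R (f x) (f (x + 1)))
    (hmin : ∀ l < m, ¬ HasWalk R (f 0) (f m) l) : Set.InjOn f (Set.Iic m) := by
  have key : ∀ a b, a < b → b ≤ m → f a ≠ f b := fun a b hab hbm heq =>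
    hmin _ (by omega) (of_forall_lt_of_eq hf hab hbm heq)
  intro a ha b hb heq
  by_contra hne
  rcases Nat.lt_or_gt_of_ne hne with h | h
  · exact key a b h hb heq
  · exact key b a h ha heq.symm

theorem exists_lt_card (h : HasWalk R x y m) : ∃ l < n, HasWalk R x y l := by
  classical
  have hex : ∃ l, HasWalk R x y l := ⟨m, h⟩
  obtain ⟨f, hf0, hfl, hf⟩ := Nat.find_spec hex
  refine ⟨Nat.find hex, ?_, Nat.find_spec hex⟩
  have hinj : Set.InjOn f (Set.Iic (Nat.find hex)) :=
    injOn_of_forall_lt hf fun l hl hw => Nat.find_min hex hl (hf0 ▸ hfl ▸ hw)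
  simpa using Finset.card_le_card_of_injOn f (s := Finset.range (Nat.find hex + 1))
    (t := Finset.univ) (fun _ _ => Finset.mem_univ _)
    (hinj.mono fun x hx => by simpa [Nat.lt_succ_iff] using hx)

theorem hasWalk_hasWalk_iff {s : ℕ} :
    HasWalk (fun a b => HasWalk R a b s) x y m ↔ HasWalk R x y (m * s) := by
  constructor
  · intro h
    induction m generalizing y with
    | zero => obtain ⟨f, rfl, rfl, -⟩ := h; simpa using refl R (f 0)
    | succ m ih =>
      obtain ⟨f, rfl, rfl, hf⟩ := h
      rw [Nat.succ_mul]
      exact (ih ⟨f, rfl, rfl, fun l hl => hf l (by omega)⟩).trans (hf m (by omega))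
  · rintro ⟨f, rfl, rfl, hf⟩
    refine ⟨fun l => f (l * s), by simp, rfl, fun l hl => ?_⟩
    have h := of_forall_lt hf (Nat.mul_le_mul_right s (Nat.le_succ l))
      (Nat.mul_le_mul_right s hl)
    simpa only [Nat.succ_mul, Nat.add_sub_cancel_left] using h

end HasWalk

section StronglyConnected

variable {n : ℕ} {E : Fin n → Fin n → Prop}

def closedWalkLengths (E : Fin n → Fin n → Prop) (v : Fin n) : AddSubmonoid ℕ where
  carrier := {m | HasWalk E v v m}
  add_mem' := HasWalk.trans
  zero_mem' := HasWalk.refl E v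

theorem setGcd_closedWalkLengths_dvd (hsc : ∀ i j : Fin n, ∃ k, HasWalk E i j k)
    (v : Fin n) {u : Fin n} {k : ℕ} (hk : HasWalk E u u k) :
    Nat.setGcd (closedWalkLengths E v) ∣ k := by
  obtain ⟨a, ha⟩ := hsc v u
  obtain ⟨b, hb⟩ := hsc u v
  have hab := Nat.setGcd_dvd_of_mem (s := closedWalkLengths E v) (ha.trans hb)
  have hakb := Nat.setGcd_dvd_of_mem (s := closedWalkLengths E v) ((ha.trans hk).trans hb)
  rw [add_right_comm] at hakb
  exact (Nat.dvd_add_right hab).mp hakb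

theorem eventually_hasWalk_self (hsc : ∀ i j : Fin n, ∃ k, HasWalk E i j k)
    (hap : ∀ d : ℕ, (∀ k, 0 < k → (∃ i, HasWalk E i i k) → d ∣ k) → d = 1)
    (v : Fin n) : ∀ᶠ m in atTop, HasWalk E v v m := by
  have hgcd : Nat.setGcd (closedWalkLengths E v) = 1 :=
    hap _ fun k _ ⟨u, hu⟩ => setGcd_closedWalkLengths_dvd hsc v hu
  obtain ⟨N, hN⟩ := Nat.exists_mem_closure_of_ge (closedWalkLengths E v : Set ℕ)
  exact eventually_atTop.mpr
    ⟨N, fun m hm => (AddSubmonoid.closure_eq _).le (hN m hm (hgcd ▸ one_dvd m))⟩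

/-- Once `v` lies on a closed walk of length `s`, a walk from `v` to `j` of length a multiple
of `s` can be shortened to fewer than `n` blocks of length `s` and then padded by the loop. -/
theorem hasWalk_mul_of_hasWalk_self (hsc : ∀ i j : Fin n, ∃ k, HasWalk E i j k)
    (hap : ∀ d : ℕ, (∀ k, 0 < k → (∃ i, HasWalk E i i k) → d ∣ k) → d = 1)
    {v : Fin n} {s : ℕ} (hs : 0 < s) (hv : HasWalk E v v s) (j : Fin n) {L : ℕ}
    (hL : n - 1 ≤ L) : HasWalk E v j (L * s) := by
  obtain ⟨N, hN⟩ := (eventually_hasWalk_self hsc hap v).exists_forall_of_atTop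
  obtain ⟨b, hb⟩ := hsc v j
  have hNb : N + b ≤ (N + b) * s := Nat.le_mul_of_pos_right _ hs
  have hwalk : HasWalk E v j ((N + b) * s) := by
    simpa [show (N + b) * s - b + b = (N + b) * s by omega] using
      (hN ((N + b) * s - b) (by omega)).trans hb
  obtain ⟨M, hMn, hM⟩ := (HasWalk.hasWalk_hasWalk_iff.mpr hwalk).exists_lt_card
  refine HasWalk.hasWalk_hasWalk_iff.mp ?_
  simpa [show L - M + M = L by omega] using (HasWalk.of_loop hv (L - M)).trans hM

end StronglyConnected

section ShortestCycle

variable {n : ℕ} {E : Fin n → Fin n → Prop} {s : ℕ} {F : ℕ → Fin n}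

theorem exists_periodic_of_hasWalk_self {x : Fin n} (hs : 0 < s) (h : HasWalk E x x s) :
    ∃ F : ℕ → Fin n, Function.Periodic F s ∧ ∀ m, E (F m) (F (m + 1)) := by
  obtain ⟨f, hf0, hfs, hf⟩ := h
  refine ⟨fun m => f (m % s), fun m => by simp, fun m => ?_⟩
  have hm := Nat.mod_lt m hs
  simp only [← Nat.mod_add_mod m]
  rcases (show m % s + 1 ≤ s from hm).lt_or_eq with hlt | heq
  · simpa only [Nat.mod_eq_of_lt hlt] using hf _ hm
  · convert hf _ hm using 1
    rw [heq, Nat.mod_self, hf0, hfs]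

theorem exists_shortest_cycle
    (hap : ∀ d : ℕ, (∀ k, 0 < k → (∃ i, HasWalk E i i k) → d ∣ k) → d = 1) :
    ∃ s, 0 < s ∧
      (∃ F : ℕ → Fin n, Function.Periodic F s ∧ ∀ m, E (F m) (F (m + 1))) ∧
      ∀ c, 0 < c → c < s → ∀ x, ¬ HasWalk E x x c := by
  classical
  have hex : ∃ c, 0 < c ∧ ∃ x, HasWalk E x x c := by
    by_contra! h
    exact absurd (hap 2 fun k hk ⟨x, hx⟩ => absurd hx (h k hk x)) (by decide)
  obtain ⟨hs, x, hx⟩ := Nat.find_spec hex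
  exact ⟨Nat.find hex, hs, exists_periodic_of_hasWalk_self hs hx,
    fun c hc hcs y hy => Nat.find_min hex hcs ⟨hc, y, hy⟩⟩

theorem injOn_Iio_of_shortest (hF : ∀ m, E (F m) (F (m + 1)))
    (hmin : ∀ c, 0 < c → c < s → ∀ x, ¬ HasWalk E x x c) :
    Set.InjOn F (Set.Iio s) := by
  have key : ∀ a b, a < b → b < s → F a ≠ F b := fun a b hab hbs heq =>
    hmin (b - a) (by omega) (by omega) (F a) <| by
      simpa [Nat.add_sub_cancel' hab.le, ← heq] using HasWalk.of_forall hF a (b - a)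
  intro a ha b hb heq
  by_contra hne
  rcases Nat.lt_or_gt_of_ne hne with h | h
  · exact key a b h hb heq
  · exact key b a h ha heq.symm

theorem eq_iff_natCast_eq (hper : Function.Periodic F s) (hs : 0 < s)
    (hinj : Set.InjOn F (Set.Iio s)) {a b : ℕ} : F a = F b ↔ (a : ZMod s) = b := by
  rw [ZMod.natCast_eq_natCast_iff', ← hper.map_mod_nat a, ← hper.map_mod_nat b]
  exact ⟨fun h => hinj (Nat.mod_lt a hs) (Nat.mod_lt b hs) h, congrArg F⟩

/-- A shortest walk from `i` to the cycle, followed by the cycle, visits `d + s` distinct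
vertices. -/
theorem exists_hasWalk_cycle_add_le (hsc : ∀ i j : Fin n, ∃ k, HasWalk E i j k)
    (hinj : Set.InjOn F (Set.Iio s)) (i : Fin n) :
    ∃ d t, d + s ≤ n ∧ HasWalk E i (F t) d := by
  classical
  have hex : ∃ d t, HasWalk E i (F t) d := ⟨_, 0, (hsc i (F 0)).choose_spec⟩
  obtain ⟨t, g, hg0, hgd, hg⟩ := Nat.find_spec hex
  set d := Nat.find hex
  have hginj : Set.InjOn g (Set.Iic d) := HasWalk.injOn_of_forall_lt hg fun l hl hw =>
    Nat.find_min hex hl ⟨t, hg0 ▸ hgd ▸ hw⟩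
  have hoff : ∀ x < d, ∀ c, g x ≠ F c := fun x hx c hxc =>
    Nat.find_min hex hx ⟨c, hg0 ▸ hxc ▸ HasWalk.of_forall_lt hg x.zero_le hx.le⟩
  have hdisj : Disjoint ((Finset.range d).image g) ((Finset.range s).image F) := by
    simp only [Finset.disjoint_left, Finset.mem_image, Finset.mem_range]
    rintro _ ⟨x, hx, rfl⟩ ⟨c, -, hc⟩
    exact hoff x hx c hc.symm
  have hcard := ((Finset.range d).image g ∪ (Finset.range s).image F).card_le_univ
  rw [Finset.card_union_of_disjoint hdisj,
    Finset.card_image_of_injOn (hginj.mono fun x hx => (Finset.mem_range.mp hx).le),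
    Finset.card_image_of_injOn (hinj.mono fun x hx => by simpa using hx)] at hcard
  exact ⟨d, t, by simpa using hcard, g, hg0, hgd, hg⟩

/-- If the shortest cycle passes through every vertex, then every edge leaving a vertex of
the cycle is the next edge of the cycle: any other edge would close a shorter cycle. -/
theorem dvd_of_shortest_cycle_eq_card (hs : 0 < s) (hper : Function.Periodic F s)
    (hF : ∀ m, E (F m) (F (m + 1))) (hmin : ∀ c, 0 < c → c < s → ∀ x, ¬ HasWalk E x x c)
    (hsn : s = n) {x : Fin n} {k : ℕ} (hk : HasWalk E x x k) : s ∣ k := by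
  classical
  have : NeZero s := ⟨hs.ne'⟩
  have hinj := injOn_Iio_of_shortest hF hmin
  have heq : ∀ {a b : ℕ}, F a = F b ↔ (a : ZMod s) = b := eq_iff_natCast_eq hper hs hinj
  have hsurj : ∀ w, ∃ b, F b = w := by
    have huniv : (Finset.range s).image F = Finset.univ := Finset.eq_univ_of_card _ <| by
      rw [Finset.card_image_of_injOn (hinj.mono fun x hx => by simpa using hx)]
      simp [hsn]
    intro w
    obtain ⟨b, -, hb⟩ := Finset.mem_image.mp (huniv ▸ Finset.mem_univ w)
    exact ⟨b, hb⟩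
  have hnext : ∀ a w, E (F a) w → w = F (a + 1) := by
    intro a w hw
    obtain ⟨b, rfl⟩ := hsurj w
    set t := ((a - b : ZMod s)).val
    have hbt : F (b + t) = F a := heq.mpr (by simp [t])
    have hcycle : HasWalk E (F a) (F a) (1 + t) :=
      (HasWalk.single hw).trans (hbt ▸ HasWalk.of_forall hF b t)
    have ht : t + 1 = s := by
      have := ZMod.val_lt (a - b : ZMod s)
      by_contra h
      exact hmin (1 + t) (by omega) (by omega) _ hcycle
    have ht' : ((t : ℕ) : ZMod s) = a - b := ZMod.natCast_zmod_val _
    have hs0 : (t : ZMod s) + 1 = 0 := by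
      exact_mod_cast (congrArg (Nat.cast : ℕ → ZMod s) ht).trans (ZMod.natCast_self s)
    refine heq.mpr ?_
    push_cast
    linear_combination ht' - hs0
  obtain ⟨g, hg0, hgk, hg⟩ := hk
  obtain ⟨b, hb⟩ := hsurj x
  have htrack : ∀ m ≤ k, g m = F (b + m) := by
    intro m hm
    induction m with
    | zero => rw [hg0, ← hb, Nat.add_zero]
    | succ m ih => exact hnext _ _ (ih (by omega) ▸ hg m hm)
  have hbk : F (b + k) = F b := by rw [← htrack k le_rfl, hgk, hb]
  rw [← ZMod.natCast_eq_zero_iff]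
  simpa using heq.mp hbk

end ShortestCycle

theorem exists_eq_add_add_mul_of_sq_le {n d s k : ℕ} (hs : 0 < s) (hds : d + s ≤ n)
    (hsn : s < n ∨ n = 1) (hk : n ^ 2 + 2 ≤ k + 2 * n) :
    ∃ u L, n - 1 ≤ L ∧ k = d + u + L * s := by
  have hdk : d ≤ k := by nlinarith
  have hdiv := Nat.mod_add_div (k - d) s
  refine ⟨(k - d) % s, (k - d) / s, ?_, by rw [mul_comm] at hdiv; omega⟩
  rcases hsn with hsn | rfl
  · by_contra! hL
    obtain ⟨m, rfl⟩ : ∃ m, n = m + 2 := ⟨n - 2, by omega⟩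
    have hmod := Nat.mod_lt (k - d) hs
    have : s * ((k - d) / s) ≤ (m + 1) * m := Nat.mul_le_mul (by omega) (by omega)
    have hkd : k - d + d = k := Nat.sub_add_cancel hdk
    nlinarith
  · exact Nat.zero_le _

theorem stmt9_general {n : ℕ} (E : Fin n → Fin n → Prop)
    (hsc : ∀ i j : Fin n, ∃ k, HasWalk E i j k)
    (hap : ∀ d : ℕ, (∀ k, 0 < k → (∃ i, HasWalk E i i k) → d ∣ k) → d = 1)
    (i j : Fin n) (k : ℕ) (hk : n ^ 2 + 2 ≤ k + 2 * n) :
    HasWalk E i j k := by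
  obtain ⟨s, hs, ⟨F, hper, hF⟩, hmin⟩ := exists_shortest_cycle hap
  obtain ⟨d, t, hds, hit⟩ := exists_hasWalk_cycle_add_le hsc (injOn_Iio_of_shortest hF hmin) i
  have hsn : s < n ∨ n = 1 := by
    rcases (show s ≤ n by omega).lt_or_eq with h | h
    · exact .inl h
    · refine .inr (h ▸ hap s fun k _ ⟨x, hx⟩ => ?_)
      exact dvd_of_shortest_cycle_eq_card hs hper hF hmin h hx
  obtain ⟨u, L, hL, rfl⟩ := exists_eq_add_add_mul_of_sq_le hs hds hsn hk
  have hloop : HasWalk E (F (t + u)) (F (t + u)) s := by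
    simpa only [hper (t + u)] using HasWalk.of_forall hF (t + u) s
  exact (hit.trans (HasWalk.of_forall hF t u)).trans
    (hasWalk_mul_of_hasWalk_self hsc hap hs hloop j hL)

theorem stmt9 {n : ℕ} (hn : 1 ≤ n) (E : Fin n → Fin n → Prop)
    (hsc : ∀ i j : Fin n, ∃ k, HasWalk E i j k)
    (hap : ∀ d : ℕ, (∀ k, 0 < k → (∃ i, HasWalk E i i k) → d ∣ k) → d = 1)
    (i j : Fin n) (k : ℕ) (hk : n ^ 2 + 2 ≤ k + 2 * n) :
    HasWalk E i j k :=
  stmt9_general E hsc hap i j k hk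
end

section
/- Let A be an n×n nonnegative matrix that is primitive (some power of A has all entries positive). Then A^k has all entries positive for every k ≥ n² − 2n + 2. -/
open Matrix Filter

section WLT

variable {n : ℕ}

lemma wlt_pow_nonneg (A : Matrix (Fin n) (Fin n) ℝ) (hA : ∀ i j, 0 ≤ A i j) :
    ∀ k i j, 0 ≤ (A ^ k) i j := by
  intro k
  induction k with
  | zero =>
    intro i j
    simp only [pow_zero, Matrix.one_apply]
    split <;> norm_num
  | succ k ih =>
    intro i j
    rw [pow_succ, Matrix.mul_apply]
    exact Finset.sum_nonneg fun h _ => mul_nonneg (ih i h) (hA h j)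

lemma wlt_mul_pos {B C : Matrix (Fin n) (Fin n) ℝ} (hB : ∀ i j, 0 ≤ B i j)
    (hC : ∀ i j, 0 ≤ C i j) {i h j : Fin n} (h1 : 0 < B i h) (h2 : 0 < C h j) :
    0 < (B * C) i j := by
  rw [Matrix.mul_apply]
  exact Finset.sum_pos' (fun x _ => mul_nonneg (hB i x) (hC x j))
    ⟨h, Finset.mem_univ h, mul_pos h1 h2⟩

lemma wlt_mul_decomp {B C : Matrix (Fin n) (Fin n) ℝ} (hB : ∀ i j, 0 ≤ B i j)
    (hC : ∀ i j, 0 ≤ C i j) {i j : Fin n} (hpos : 0 < (B * C) i j) :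
    ∃ h, 0 < B i h ∧ 0 < C h j := by
  by_contra hcon
  push_neg at hcon
  rw [Matrix.mul_apply] at hpos
  have hz : ∑ x, B i x * C x j = 0 := Finset.sum_eq_zero fun x _ => by
    rcases (hB i x).eq_or_lt with h | h
    · rw [← h, zero_mul]
    · have h2 : C x j = 0 := le_antisymm (hcon x h) (hC x j)
      rw [h2, mul_zero]
  rw [hz] at hpos
  exact lt_irrefl 0 hpos

lemma wlt_walk_iff (A : Matrix (Fin n) (Fin n) ℝ) (hA : ∀ i j, 0 ≤ A i j) :
    ∀ k i j, 0 < (A ^ k) i j ↔ HasWalk (fun a b => 0 < A a b) i j k := by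
  intro k
  induction k with
  | zero =>
    intro i j
    simp only [pow_zero, Matrix.one_apply]
    constructor
    · intro h
      have hij : i = j := by
        by_contra hne
        rw [if_neg hne] at h
        exact lt_irrefl 0 h
      subst hij
      exact ⟨fun _ => i, rfl, rfl, fun m hm => absurd hm (Nat.not_lt_zero m)⟩
    · rintro ⟨f, h0, hk, -⟩
      have hij : i = j := by rw [← h0, hk]
      rw [if_pos hij]
      norm_num
  | succ k ih =>
    intro i j
    rw [pow_succ]
    constructor
    · intro hpos
      obtain ⟨h, h1, h2⟩ := wlt_mul_decomp (wlt_pow_nonneg A hA k) hA hpos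
      obtain ⟨f, hf0, hfk, hfe⟩ := (ih i h).mp h1
      refine ⟨fun t => if t ≤ k then f t else j, by simp [hf0], ?_, ?_⟩
      · show (if k + 1 ≤ k then f (k + 1) else j) = j
        rw [if_neg (by omega)]
      intro m hm
      show 0 < A (if m ≤ k then f m else j) (if m + 1 ≤ k then f (m + 1) else j)
      rcases Nat.lt_or_ge m k with h' | h'
      · rw [if_pos (le_of_lt h'), if_pos (Nat.succ_le_of_lt h')]
        exact hfe m h'
      · have hmk : m = k := by omega
        subst hmk
        rw [if_pos (le_refl m), if_neg (by omega : ¬ m + 1 ≤ m), hfk]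
        exact h2
    · rintro ⟨f, hf0, hfk, hfe⟩
      refine wlt_mul_pos (wlt_pow_nonneg A hA k) hA
        ((ih i (f k)).mpr ⟨f, hf0, rfl, fun m hm => hfe m (by omega)⟩) ?_
      have h := hfe k (Nat.lt_succ_self k)
      rwa [hfk] at h

lemma wlt_subwalk {E : Fin n → Fin n → Prop} {f : ℕ → Fin n} {t : ℕ}
    (hfe : ∀ m < t, E (f m) (f (m + 1))) {a b : ℕ} (hab : a ≤ b) (hbt : b ≤ t) :
    HasWalk E (f a) (f b) (b - a) := by
  refine ⟨fun t' => f (a + t'), by simp, ?_, ?_⟩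
  · show f (a + (b - a)) = f b
    rw [Nat.add_sub_cancel' hab]
  intro m hm
  show E (f (a + m)) (f (a + (m + 1)))
  exact hfe (a + m) (by omega)

lemma wlt_row_pos (A : Matrix (Fin n) (Fin n) ℝ) (hA : ∀ i j, 0 ≤ A i j)
    (hout : ∀ i, ∃ h, 0 < A i h) :
    ∀ t i, ∃ h, 0 < (A ^ t) i h := by
  intro t
  induction t with
  | zero => intro i; exact ⟨i, by simp [pow_zero, Matrix.one_apply_eq]⟩
  | succ t ih =>
    intro i
    obtain ⟨h, hh⟩ := ih i
    obtain ⟨h', hh'⟩ := hout h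
    exact ⟨h', by rw [pow_succ]; exact wlt_mul_pos (wlt_pow_nonneg A hA t) hA hh hh'⟩

lemma wlt_all_pos (A : Matrix (Fin n) (Fin n) ℝ) (hA : ∀ i j, 0 ≤ A i j)
    (hout : ∀ i, ∃ h, 0 < A i h) (m : ℕ) (hm : ∀ i j, 0 < (A ^ m) i j) :
    ∀ N, m ≤ N → ∀ i j, 0 < (A ^ N) i j := by
  intro N hN i j
  obtain ⟨h, hh⟩ := wlt_row_pos A hA hout (N - m) i
  have hsplit : A ^ N = A ^ (N - m) * A ^ m := by
    rw [← pow_add, Nat.sub_add_cancel hN]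
  rw [hsplit]
  exact wlt_mul_pos (wlt_pow_nonneg A hA _) (wlt_pow_nonneg A hA _) hh (hm h j)

lemma wlt_divides (A : Matrix (Fin n) (Fin n) ℝ) (hA : ∀ i j, 0 ≤ A i j)
    (hno : ∀ t, 1 ≤ t → t < n → ∀ w : Fin n, ¬ 0 < (A ^ t) w w) :
    ∀ t, 1 ≤ t → ∀ u, 0 < (A ^ t) u u → n ∣ t := by
  intro t
  induction t using Nat.strong_induction_on with
  | _ t ih =>
    intro ht1 u hu
    rcases Nat.lt_or_ge t n with hlt | hge
    · exact absurd hu (hno t ht1 hlt u)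
    obtain ⟨f, hf0, hft, hfe⟩ := (wlt_walk_iff A hA t u u).mp hu
    have hkey : ∀ a b : ℕ, a < b → b ≤ n → f a = f b → a = 0 ∧ b = n := by
      intro a b hab hbn hfab
      have hw2 := wlt_subwalk (E := fun a b => 0 < A a b) (f := f) hfe (Nat.le_of_lt hab) (le_trans hbn hge)
      rw [hfab] at hw2
      have hpos : 0 < (A ^ (b - a)) (f b) (f b) := (wlt_walk_iff A hA _ _ _).mpr hw2
      rcases Nat.lt_or_ge (b - a) n with h' | h'
      · exact absurd hpos (hno (b - a) (by omega) h' (f b))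
      · omega
    obtain ⟨a, b, hab, hfab⟩ := Fintype.exists_ne_map_eq_of_card_lt
      (fun x : Fin (n + 1) => f x) (by simp)
    have ha := a.isLt
    have hb := b.isLt
    have hfn : f n = f 0 := by
      rcases lt_trichotomy (a : ℕ) (b : ℕ) with h' | h' | h'
      · obtain ⟨h0, hn'⟩ := hkey a b h' (by omega) hfab
        exact (congrArg f hn').symm.trans (hfab.symm.trans (congrArg f h0))
      · exact absurd (Fin.ext h') hab
      · obtain ⟨h0, hn'⟩ := hkey b a h' (by omega) hfab.symm
        exact (congrArg f hn').symm.trans (hfab.trans (congrArg f h0))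
    rcases Nat.eq_or_lt_of_le hge with heq | hlt'
    · rw [← heq]
    · have htail := wlt_subwalk (E := fun a b => 0 < A a b) (f := f) hfe hge (le_refl t)
      rw [hfn, hf0, hft] at htail
      have hpos : 0 < (A ^ (t - n)) u u := (wlt_walk_iff A hA _ _ _).mpr htail
      have hn1 : 0 < n := by omega
      have hdvd := ih (t - n) (by omega) (by omega) u hpos
      have hd2 := Nat.dvd_add hdvd (dvd_refl n)
      rwa [Nat.sub_add_cancel hge] at hd2

lemma wlt_reach_stable (S : ℕ → Finset (Fin n)) (F : Finset (Fin n) → Finset (Fin n)) (c : ℕ)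
    (mono : ∀ t, S t ⊆ S (t + 1))
    (hstep : ∀ t, S (t + 1) = F (S t))
    (hc : c ≤ (S 0).card)
    (hall : ∀ i : Fin n, ∃ t, i ∈ S t) :
    ∀ i, i ∈ S (n - c) := by
  have monoLe : ∀ a b, a ≤ b → S a ⊆ S b := by
    intro a b hab
    induction b, hab using Nat.le_induction with
    | base => exact Finset.Subset.refl _
    | succ b hb ih => exact ih.trans (mono b)
  have stab : ∀ t, S t = S (t + 1) → ∀ r, t ≤ r → S r = S t := by
    intro t ht r hr
    induction r, hr using Nat.le_induction with
    | base => rfl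
    | succ r hr ih => rw [hstep r, ih, ← hstep t, ← ht]
  have key : ∀ t, (∀ i : Fin n, (∃ r, i ∈ S r) → i ∈ S t) ∨ c + t ≤ (S t).card := by
    intro t
    induction t with
    | zero => exact Or.inr (by simpa using hc)
    | succ t ih =>
      rcases ih with h | h
      · exact Or.inl fun i hi => mono t (h i hi)
      · by_cases hEq : S t = S (t + 1)
        · refine Or.inl fun i hi => ?_
          obtain ⟨r, hr⟩ := hi
          rcases le_or_gt r (t + 1) with h' | h'
          · exact monoLe r (t + 1) h' hr
          · have hrt := stab t hEq r (by omega)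
            rw [hrt] at hr
            exact mono t hr
        · refine Or.inr ?_
          have hss : S t ⊂ S (t + 1) := ⟨mono t, fun hsub => hEq (Finset.Subset.antisymm (mono t) hsub)⟩
          have := Finset.card_lt_card hss
          omega
  rcases key (n - c) with h | h
  · exact fun i => h i (hall i)
  · intro i
    have hcn : c ≤ n := hc.trans ((Finset.card_le_univ _).trans (by simp))
    have hcards : (S (n - c)).card = Fintype.card (Fin n) := by
      have h2 : (S (n - c)).card ≤ n := (Finset.card_le_univ _).trans (by simp)
      simp only [Fintype.card_fin]
      omega
    rw [Finset.eq_univ_of_card _ hcards]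
    exact Finset.mem_univ i

end WLT

theorem stmt10 {n : ℕ} (A : Matrix (Fin n) (Fin n) ℝ)
    (hnonneg : ∀ i j, 0 ≤ A i j)
    (hprim : ∃ m, 1 ≤ m ∧ ∀ i j, 0 < (A ^ m) i j)
    (k : ℕ) (hk : n ^ 2 + 2 ≤ k + 2 * n) :
    ∀ i j, 0 < (A ^ k) i j := by
  classical
  obtain ⟨m, hm1, hmpos⟩ := hprim
  rcases Nat.eq_zero_or_pos n with hn0 | hn
  · intro i j
    exact absurd i.isLt (by omega)
  have hApow := wlt_pow_nonneg A hnonneg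
  have hout : ∀ i, ∃ h, 0 < A i h := by
    intro i
    have hp := hmpos i i
    obtain ⟨m', rfl⟩ : ∃ m', m = m' + 1 := ⟨m - 1, by omega⟩
    rw [pow_succ'] at hp
    obtain ⟨h, h1, -⟩ := wlt_mul_decomp hnonneg (hApow m') hp
    exact ⟨h, h1⟩
  have hbig : ∀ N, m ≤ N → ∀ i j, 0 < (A ^ N) i j :=
    wlt_all_pos A hnonneg hout m hmpos
  rcases Nat.lt_or_ge n 2 with hn1 | hn2
  · -- n = 1
    have hne : n = 1 := by omega
    subst hne
    have h1 : ∀ i j : Fin 1, 0 < (A ^ 1) i j := by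
      intro i j
      obtain ⟨h, hh⟩ := hout i
      rw [pow_one]
      rwa [Subsingleton.elim h j] at hh
    have hk1 : 1 ≤ k := by
      norm_num at hk
      omega
    exact wlt_all_pos A hnonneg hout 1 h1 k hk1
  -- now n ≥ 2
  have hex : ∃ t, 1 ≤ t ∧ ∃ v : Fin n, 0 < (A ^ t) v v :=
    ⟨m, hm1, ⟨0, hn⟩, hmpos _ _⟩
  set s := Nat.find hex with hs
  obtain ⟨hs1, v, hv⟩ := Nat.find_spec hex
  rw [← hs] at hs1 hv
  have hmin : ∀ t, 1 ≤ t → t < s → ∀ w : Fin n, ¬ 0 < (A ^ t) w w := by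
    intro t h1 hts w hpos
    rw [hs] at hts
    exact Nat.find_min hex hts ⟨h1, w, hpos⟩
  obtain ⟨f, hf0, hfs, hfe⟩ := (wlt_walk_iff A hnonneg s v v).mp hv
  have hshort : ∀ a b : ℕ, a < b → b ≤ s → b - a < s → f a = f b → False := by
    intro a b hab hbs hlt hfab
    have hw2 := wlt_subwalk (E := fun a b => 0 < A a b) (f := f) hfe (le_of_lt hab) hbs
    rw [hfab] at hw2
    exact hmin (b - a) (by omega) hlt (f b) ((wlt_walk_iff A hnonneg _ _ _).mpr hw2)
  have hsn : s ≤ n := by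
    by_contra hcon
    push_neg at hcon
    obtain ⟨a, b, hab, hfab⟩ := Fintype.exists_ne_map_eq_of_card_lt
      (fun x : Fin (n + 1) => f x) (by simp)
    have ha := a.isLt
    have hb := b.isLt
    rcases lt_trichotomy (a : ℕ) (b : ℕ) with h' | h' | h'
    · exact hshort a b h' (by omega) (by omega) hfab
    · exact hab (Fin.ext h')
    · exact hshort b a h' (by omega) (by omega) hfab.symm
  have hsn1 : s < n := by
    rcases Nat.lt_or_ge s n with h | h
    · exact h
    have hsn' : s = n := by omega
    have hno : ∀ t, 1 ≤ t → t < n → ∀ w : Fin n, ¬ 0 < (A ^ t) w w := by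
      intro t h1 h2
      exact hmin t h1 (by omega)
    have hd1 : n ∣ m := wlt_divides A hnonneg hno m hm1 v (hmpos v v)
    have hd2 : n ∣ (m + 1) :=
      wlt_divides A hnonneg hno (m + 1) (by omega) v (hbig (m + 1) (by omega) v v)
    have hd3 : n ∣ 1 := by
      have := Nat.dvd_sub hd2 hd1
      simpa using this
    have := Nat.le_of_dvd one_pos hd3
    omega
  -- the cycle vertex set
  set VC := (Finset.range s).image f with hVC
  have hvmem : v ∈ VC := Finset.mem_image.mpr ⟨0, Finset.mem_range.mpr hs1, hf0⟩
  have hcard : VC.card = s := by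
    rw [hVC, Finset.card_image_of_injOn, Finset.card_range]
    intro a ha b hb hfab
    simp only [Finset.coe_range, Set.mem_Iio] at ha hb
    by_contra hne
    rcases lt_trichotomy a b with h' | h' | h'
    · exact hshort a b h' (by omega) (by omega) hfab
    · exact hne h'
    · exact hshort b a h' (by omega) (by omega) hfab.symm
  have hloop : ∀ w ∈ VC, 0 < (A ^ s) w w := by
    intro w hw
    obtain ⟨a, ha, rfl⟩ := Finset.mem_image.mp hw
    rw [Finset.mem_range] at ha
    have h1 : 0 < (A ^ (s - a)) (f a) v := by
      have hw1 := wlt_subwalk (E := fun a b => 0 < A a b) (f := f) hfe (Nat.le_of_lt ha) (le_refl s)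
      rw [hfs] at hw1
      exact (wlt_walk_iff A hnonneg _ _ _).mpr hw1
    have h2 : 0 < (A ^ a) v (f a) := by
      have hw2 := wlt_subwalk (E := fun a b => 0 < A a b) (f := f) hfe (Nat.zero_le a) (Nat.le_of_lt ha)
      rw [hf0] at hw2
      have := (wlt_walk_iff A hnonneg _ _ _).mpr hw2
      simpa using this
    have h3 : 0 < (A ^ (s - a) * A ^ a) (f a) (f a) :=
      wlt_mul_pos (hApow _) (hApow _) h1 h2
    rwa [← pow_add, Nat.sub_add_cancel (Nat.le_of_lt ha)] at h3
  have hnext : ∀ w ∈ VC, ∃ w' ∈ VC, 0 < A w w' := by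
    intro w hw
    obtain ⟨a, ha, rfl⟩ := Finset.mem_image.mp hw
    rw [Finset.mem_range] at ha
    refine ⟨f (a + 1), ?_, hfe a ha⟩
    rcases Nat.lt_or_ge (a + 1) s with h' | h'
    · exact Finset.mem_image.mpr ⟨a + 1, Finset.mem_range.mpr h', rfl⟩
    · have h1 : a + 1 = s := by omega
      rw [h1, hfs]
      exact hvmem
  -- reach the cycle in exactly n - s steps
  have hreach1 : ∀ i : Fin n, ∃ w ∈ VC, 0 < (A ^ (n - s)) i w := by
    have key := wlt_reach_stable
      (fun t => Finset.univ.filter fun u => ∃ w ∈ VC, 0 < (A ^ t) u w)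
      (fun X => Finset.univ.filter fun u => ∃ u' ∈ X, 0 < A u u') s
      (by
        intro t u hu
        simp only [Finset.mem_filter, Finset.mem_univ, true_and] at hu ⊢
        obtain ⟨w, hw, hpos⟩ := hu
        obtain ⟨w', hw', he⟩ := hnext w hw
        exact ⟨w', hw', by rw [pow_succ]; exact wlt_mul_pos (hApow t) hnonneg hpos he⟩)
      (by
        intro t
        ext u
        simp only [Finset.mem_filter, Finset.mem_univ, true_and]
        constructor
        · rintro ⟨w, hw, hpos⟩
          rw [pow_succ'] at hpos
          obtain ⟨u', h1, h2⟩ := wlt_mul_decomp hnonneg (hApow t) hpos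
          exact ⟨u', ⟨w, hw, h2⟩, h1⟩
        · rintro ⟨u', ⟨w, hw, h2⟩, h1⟩
          exact ⟨w, hw, by rw [pow_succ']; exact wlt_mul_pos hnonneg (hApow t) h1 h2⟩)
      (by
        calc s = VC.card := hcard.symm
        _ ≤ _ := Finset.card_le_card (fun w hw => Finset.mem_filter.mpr
            ⟨Finset.mem_univ w, w, hw, by simp [pow_zero, Matrix.one_apply_eq]⟩))
      (fun i => ⟨m, Finset.mem_filter.mpr ⟨Finset.mem_univ i, v, hvmem, hmpos i v⟩⟩)
    intro i
    have h := key i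
    simp only [Finset.mem_filter, Finset.mem_univ, true_and] at h
    exact h
  -- from a cycle vertex, reach everything in exactly s * (n - 1) steps
  have hreach2 : ∀ w ∈ VC, ∀ j : Fin n, 0 < (A ^ (s * (n - 1))) w j := by
    intro w hw
    have key := wlt_reach_stable
      (fun t => Finset.univ.filter fun j => 0 < (A ^ (s * t)) w j)
      (fun X => Finset.univ.filter fun j => ∃ h ∈ X, 0 < (A ^ s) h j) 1
      (by
        intro t j hj
        simp only [Finset.mem_filter, Finset.mem_univ, true_and] at hj ⊢
        have he : s * (t + 1) = s + s * t := by ring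
        rw [he, pow_add]
        exact wlt_mul_pos (hApow s) (hApow _) (hloop w hw) hj)
      (by
        intro t
        ext j
        simp only [Finset.mem_filter, Finset.mem_univ, true_and]
        have he : s * (t + 1) = s * t + s := by ring
        rw [he, pow_add]
        constructor
        · intro hpos
          obtain ⟨h, h1, h2⟩ := wlt_mul_decomp (hApow _) (hApow _) hpos
          exact ⟨h, h1, h2⟩
        · rintro ⟨h, h1, h2⟩
          exact wlt_mul_pos (hApow _) (hApow _) h1 h2)
      (by
        refine Finset.card_pos.mpr ⟨w, ?_⟩
        simp only [Finset.mem_filter, Finset.mem_univ, true_and, Nat.mul_zero, pow_zero,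
          Matrix.one_apply_eq]
        norm_num)
      (fun j => ⟨m, Finset.mem_filter.mpr ⟨Finset.mem_univ j,
        hbig (s * m) (Nat.le_mul_of_pos_left m hs1) w j⟩⟩)
    intro j
    have h := key j
    simp only [Finset.mem_filter, Finset.mem_univ, true_and] at h
    exact h
  -- arithmetic: (n - s) + s * (n - 1) ≤ k
  have harith : (n - s) + s * (n - 1) ≤ k := by
    have h1 : s * (n - 1) = s * (n - 2) + s := by
      have h : n - 1 = (n - 2) + 1 := by omega
      rw [h, Nat.mul_add, Nat.mul_one]
    have h2 : s * (n - 2) ≤ (n - 1) * (n - 2) := Nat.mul_le_mul_right _ (by omega)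
    have h3 : n ^ 2 + 2 = (n - 1) * (n - 2) + 3 * n := by
      obtain ⟨p, rfl⟩ : ∃ p, n = p + 2 := ⟨n - 2, by omega⟩
      have e1 : p + 2 - 1 = p + 1 := by omega
      have e2 : p + 2 - 2 = p := by omega
      rw [e1, e2]
      ring
    generalize hQ : n ^ 2 = K at hk h3
    generalize hY : (n - 1) * (n - 2) = Y at h2 h3
    generalize hX : s * (n - 2) = X at h1 h2
    generalize hZ : s * (n - 1) = Z at h1 ⊢
    omega
  -- assemble
  intro i j
  obtain ⟨h1v, hh1⟩ := wlt_row_pos A hnonneg hout (k - ((n - s) + s * (n - 1))) i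
  obtain ⟨w, hwVC, hh2⟩ := hreach1 h1v
  have hh3 := hreach2 w hwVC j
  have hmid : 0 < (A ^ ((n - s) + s * (n - 1))) h1v j := by
    rw [pow_add]
    exact wlt_mul_pos (hApow _) (hApow _) hh2 hh3
  have hkeq : k = (k - ((n - s) + s * (n - 1))) + ((n - s) + s * (n - 1)) :=
    (Nat.sub_add_cancel harith).symm
  rw [hkeq, pow_add]
  exact wlt_mul_pos (hApow _) (hApow _) hh1 hmid
end

section
/- Let A(k), k ≥ 1, be row-stochastic n×n matrices all of whose digraphs G(A(k)) contain a common aperiodic subgraph H without sinks on the full node set {1,…,n}. Let P(k) = A(k)···A(1) and define S_j(k) = {i : P(k)_{i,j} > 0}, with P(0) the identity. Then for all l ≤ k with k − l ≥ n² − 2n + 2, S_j(l) ⊆ S_j(k). -/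
open Matrix Filter

/-!
The positive pattern of `P(k) = P(k, l) P(l)` contains that of `P(l)` once the diagonal of
`P(k, l)` is positive, and `P(k, l)ᵢᵢ > 0` as soon as `H` has a closed walk of length `k - l`
at `i`. So everything rests on a local Wielandt bound: an aperiodic node `i` of a digraph on `n`
nodes has closed walks of every length `m ≥ (n - 1)² + 1`.

Take a shortest cycle, of length `s`, through the strong component of `i`, and a shortest walk,
of length `p`, from `i` into it. The nodes of that walk are distinct and off the cycle, so
`p + s ≤ n`; and `s < n` unless `n = 1`, since a Hamiltonian shortest cycle has no chords and
makes the period `n`. Fix a node `c` of the cycle. The sets of nodes reached from `c` by walks of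
length `r + t s` grow with `t` and each determines the next, so they stabilize after `n - 1`
steps; aperiodicity gives walks from `c` to `i` of length `r + t s` for all large `t`, hence
one with `t = n - 1`. Prefixing the walk from `i` to `c` gives every length
`m ≥ p + (n - 1) s`, and `p + (n - 1) s ≤ n + (n - 2)(n - 1) = (n - 1)² + 1`.
-/

theorem subset_card_sub_ncard_of_succ_eq {α : Type*} [Finite α] {R : ℕ → Set α}
    (Φ : Set α → Set α) (hmono : ∀ t, R t ⊆ R (t + 1))
    (hstep : ∀ t, R (t + 1) = Φ (R t)) (k : ℕ) :
    R k ⊆ R (Nat.card α - (R 0).ncard) := by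
  set d := Nat.card α - (R 0).ncard
  have hR : Monotone R := monotone_nat_of_le_succ hmono
  by_cases hstab : ∃ t ≤ d, R (t + 1) = R t
  · obtain ⟨t, htd, ht⟩ := hstab
    have hconst : ∀ t' ≥ t, R t' = R t :=
      Nat.le_induction rfl fun t' _ ih => by rw [hstep, ih, ← hstep, ht]
    rcases le_total k d with hk | hk
    · exact hR hk
    · rw [hconst d htd, hconst k (htd.trans hk)]
  · push Not at hstab
    have hgrow : ∀ t ≤ d + 1, (R 0).ncard + t ≤ (R t).ncard := by
      intro t
      induction t with
      | zero => simp
      | succ t ih =>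
        intro ht
        have hlt := Set.ncard_lt_ncard ((hmono t).ssubset_of_ne (hstab t (by omega)).symm)
        have hle := ih (by omega)
        omega
    have hbig := hgrow (d + 1) le_rfl
    have hcard := Set.ncard_le_card (R (d + 1))
    have hcard₀ := Set.ncard_le_card (R 0)
    omega

section Digraph

variable {n : ℕ} {E : Fin n → Fin n → Prop}

theorem hasWalk_zero_iff {i j : Fin n} : HasWalk E i j 0 ↔ i = j :=
  ⟨fun ⟨_, h0, h1, _⟩ => h0.symm.trans h1,
    fun h => ⟨fun _ => i, rfl, h, fun _ hm => absurd hm (Nat.not_lt_zero _)⟩⟩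

theorem hasWalk_one_iff {i j : Fin n} : HasWalk E i j 1 ↔ E i j :=
  ⟨fun ⟨f, h0, h1, hf⟩ => h0 ▸ h1 ▸ hf 0 one_pos,
    fun h => ⟨fun t => if t = 0 then i else j, by simp, by simp, fun m hm => by
      obtain rfl : m = 0 := by omega
      simpa using h⟩⟩

theorem HasWalk.of_length_eq {i j : Fin n} {a b : ℕ} (h : HasWalk E i j a) (hab : a = b) :
    HasWalk E i j b :=
  hab ▸ h

theorem HasWalk.append {i j k : Fin n} {a b : ℕ} (h₁ : HasWalk E i j a)
    (h₂ : HasWalk E j k b) : HasWalk E i k (a + b) := by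
  obtain ⟨f, hf0, hfa, hf⟩ := h₁
  obtain ⟨g, hg0, hgb, hg⟩ := h₂
  refine ⟨fun t => if t ≤ a then f t else g (t - a), by simpa using hf0, ?_, fun m hm => ?_⟩
  · rcases Nat.eq_zero_or_pos b with rfl | hb
    · simp [hfa, ← hg0, hgb]
    · simp [show ¬ a + b ≤ a by omega, hgb]
  · rcases lt_trichotomy m a with hma | rfl | hma
    · simpa [hma.le, show m + 1 ≤ a by omega] using hf m hma
    · simpa [hfa, ← hg0] using hg 0 (by omega)
    · simpa [show ¬ m ≤ a by omega, show ¬ m + 1 ≤ a by omega,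
        show m + 1 - a = m - a + 1 by omega] using hg (m - a) (by omega)

theorem HasWalk.split {i k : Fin n} {a b : ℕ} (h : HasWalk E i k (a + b)) :
    ∃ j, HasWalk E i j a ∧ HasWalk E j k b := by
  obtain ⟨f, hf0, hfk, hf⟩ := h
  exact ⟨f a, ⟨f, hf0, rfl, fun m hm => hf m (by omega)⟩,
    ⟨fun t => f (a + t), rfl, hfk, fun m hm => hf (a + m) (by omega)⟩⟩

theorem HasWalk.of_add_mul_of_loop {c x : Fin n} {s r t : ℕ} (hloop : HasWalk E c c s)
    (h : HasWalk E c x (r + t * s)) : HasWalk E c x (r + (n - 1) * s) := by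
  set R : ℕ → Set (Fin n) := fun t => {x | HasWalk E c x (r + t * s)}
  have hmono : ∀ t, R t ⊆ R (t + 1) := fun t x hx =>
    (hloop.append hx).of_length_eq (by ring)
  have hstep : ∀ t, R (t + 1) = {x | ∃ y ∈ R t, HasWalk E y x s} := by
    intro t
    ext x
    constructor
    · intro hx
      exact (HasWalk.of_length_eq hx (by ring : r + (t + 1) * s = (r + t * s) + s)).split
    · rintro ⟨y, hy, hyx⟩
      exact (hy.append hyx).of_length_eq (by ring)
  have hR0 : 0 < (R 0).ncard := by
    obtain ⟨y, hy, -⟩ := h.split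
    have hne : (R 0).Nonempty := ⟨y, by simpa [R] using hy⟩
    exact hne.ncard_pos
  have hx :=
    subset_card_sub_ncard_of_succ_eq (fun X => {x | ∃ y ∈ X, HasWalk E y x s}) hmono hstep t h
  rw [Nat.card_eq_fintype_card, Fintype.card_fin] at hx
  exact monotone_nat_of_le_succ hmono (by omega : n - (R 0).ncard ≤ n - 1) hx

theorem HasWalk.exists_mem_add_card_le (T : Finset (Fin n)) {x y : Fin n} {k : ℕ} (hy : y ∈ T)
    (h : HasWalk E x y k) : ∃ z ∈ T, ∃ p, p + T.card ≤ n ∧ HasWalk E x z p := by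
  set R : ℕ → Set (Fin n) := fun t => {x | ∃ z ∈ T, ∃ q ≤ t, HasWalk E x z q}
  have hmono : ∀ t, R t ⊆ R (t + 1) := fun t x ⟨z, hz, q, hq, hw⟩ =>
    ⟨z, hz, q, by omega, hw⟩
  have hstep : ∀ t, R (t + 1) = ↑T ∪ {x | ∃ y ∈ R t, E x y} := by
    intro t
    ext x
    constructor
    · rintro ⟨z, hz, _ | q, hq, hw⟩
      · exact Or.inl (hasWalk_zero_iff.mp hw ▸ hz)
      · obtain ⟨y, hxy, hyz⟩ := (hw.of_length_eq (add_comm q 1)).split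
        exact Or.inr ⟨y, ⟨z, hz, q, by omega, hyz⟩, hasWalk_one_iff.mp hxy⟩
    · rintro (hx | ⟨y, ⟨z, hz, q, hq, hyz⟩, hxy⟩)
      · exact ⟨x, hx, 0, by omega, hasWalk_zero_iff.mpr rfl⟩
      · exact ⟨z, hz, 1 + q, by omega, (hasWalk_one_iff.mpr hxy).append hyz⟩
  have hR0 : R 0 = ↑T := by
    ext x
    constructor
    · rintro ⟨z, hz, q, hq, hw⟩
      obtain rfl : q = 0 := by omega
      exact hasWalk_zero_iff.mp hw ▸ hz
    · exact fun hx => ⟨x, hx, 0, le_rfl, hasWalk_zero_iff.mpr rfl⟩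
  have hx := subset_card_sub_ncard_of_succ_eq (fun X => ↑T ∪ {x | ∃ y ∈ X, E x y})
    hmono hstep k ⟨y, hy, k, le_rfl, h⟩
  rw [hR0, Set.ncard_coe_finset, Nat.card_eq_fintype_card, Fintype.card_fin] at hx
  obtain ⟨z, hz, p, hp, hw⟩ := hx
  have hT : T.card ≤ n := by simpa using T.card_le_univ
  exact ⟨z, hz, p, by omega, hw⟩

theorem HasWalk.potential_eq {d : ℕ} {φ : Fin n → ZMod d}
    (hφ : ∀ x y, E x y → φ y = φ x + 1) {x y : Fin n} {t : ℕ} (h : HasWalk E x y t) :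
    φ y = φ x + t := by
  induction t generalizing y with
  | zero => simp [hasWalk_zero_iff.mp h]
  | succ t ih =>
    obtain ⟨z, hxz, hzy⟩ := h.split
    rw [hφ z y (hasWalk_one_iff.mp hzy), ih hxz]
    push_cast
    ring

theorem AperiodicAt.eq_one_of_potential {d : ℕ} {φ : Fin n → ZMod d}
    (hφ : ∀ x y, E x y → φ y = φ x + 1) {x : Fin n} (hap : AperiodicAt E x) : d = 1 :=
  hap d fun t _ h => (ZMod.natCast_eq_zero_iff t d).mp (by simpa using h.potential_eq hφ)

theorem AperiodicAt.exists_forall_ge_hasWalk {i : Fin n} (hap : AperiodicAt E i) :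
    ∃ N, ∀ m ≥ N, HasWalk E i i m := by
  set L : Set ℕ := {t | 0 < t ∧ HasWalk E i i t}
  have hgcd : Nat.setGcd L = 1 := hap _ fun t ht h => Nat.setGcd_dvd_of_mem ⟨ht, h⟩
  obtain ⟨N, hN⟩ := Nat.exists_mem_closure_of_ge L
  have hclosure : ∀ m ∈ AddSubmonoid.closure L, HasWalk E i i m := fun m hm => by
    induction hm using AddSubmonoid.closure_induction with
    | mem t ht => exact ht.2
    | zero => exact hasWalk_zero_iff.mpr rfl
    | add a b _ _ ha hb => exact ha.append hb
  exact ⟨N, fun m hm => hclosure m (hN m hm (hgcd ▸ one_dvd m))⟩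

theorem HasWalk.exists_cycle {w : Fin n} {s : ℕ} [NeZero s] (h : HasWalk E w w s) :
    ∃ g : ZMod s → Fin n, g 0 = w ∧ ∀ a, E (g a) (g (a + 1)) := by
  obtain ⟨f, hf0, hfs, hf⟩ := h
  refine ⟨fun a => f a.val, by simpa using hf0, fun a => ?_⟩
  have hsucc : (a + 1).val = (a.val + 1) % s := by
    rw [← ZMod.val_natCast, Nat.cast_add, ZMod.natCast_zmod_val, Nat.cast_one]
  show E (f a.val) (f (a + 1).val)
  have ha := a.val_lt
  rcases Nat.lt_or_ge (a.val + 1) s with hlt | hge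
  · rw [hsucc, Nat.mod_eq_of_lt hlt]
    exact hf a.val ha
  · have hs : a.val + 1 = s := by omega
    rw [hsucc, hs, Nat.mod_self, hf0, ← hfs]
    simpa [hs] using hf a.val ha

section Cycle

variable {s : ℕ} {g : ZMod s → Fin n}

theorem hasWalk_cycle_add (hg : ∀ a, E (g a) (g (a + 1))) (a : ZMod s) (L : ℕ) :
    HasWalk E (g a) (g (a + L)) L := by
  induction L with
  | zero => simpa using hasWalk_zero_iff.mpr rfl
  | succ L ih =>
    simpa [add_assoc] using ih.append (hasWalk_one_iff.mpr (hg (a + L)))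

theorem hasWalk_cycle_sub [NeZero s] (hg : ∀ a, E (g a) (g (a + 1))) (a b : ZMod s) :
    HasWalk E (g a) (g b) (b - a).val := by
  simpa using hasWalk_cycle_add hg a (b - a).val

variable [NeZero s] (hg : ∀ a, E (g a) (g (a + 1)))
  (hmin : ∀ a t, 0 < t → HasWalk E (g a) (g a) t → s ≤ t)
include hg hmin

theorem injective_of_shortest_cycle : Function.Injective g := by
  intro a b hab
  by_contra hne
  have hpos : 0 < (b - a).val := ZMod.val_pos.mpr (sub_ne_zero.mpr (Ne.symm hne))
  have := hmin a _ hpos (hab ▸ hasWalk_cycle_sub hg a b)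
  exact absurd (b - a).val_lt (not_lt.mpr this)

theorem eq_add_one_of_shortest_cycle {a b : ZMod s} (hab : E (g a) (g b)) : b = a + 1 := by
  have hlen := hmin a _ (by omega) ((hasWalk_one_iff.mpr hab).append (hasWalk_cycle_sub hg b a))
  have hval : (a - b).val + 1 = s := by have := (a - b).val_lt; omega
  have hcast : a - b + 1 = 0 := by
    simpa [ZMod.natCast_self] using congrArg (Nat.cast : ℕ → ZMod s) hval
  linear_combination -hcast

theorem eq_one_of_shortest_cycle_of_bijective (hbij : Function.Bijective g) {x : Fin n}
    (hap : AperiodicAt E x) : s = 1 := by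
  have hφ : ∀ x y, E x y → Function.surjInv hbij.2 y = Function.surjInv hbij.2 x + 1 :=
    fun x y hxy => eq_add_one_of_shortest_cycle hg hmin <| by
      rwa [Function.surjInv_eq hbij.2 x, Function.surjInv_eq hbij.2 y]
  exact hap.eq_one_of_potential hφ

end Cycle

theorem HasWalk.exists_shortest_cycle {i : Fin n} {t₀ : ℕ} (ht₀ : 0 < t₀)
    (h : HasWalk E i i t₀) :
    ∃ s, 0 < s ∧ ∃ g : ZMod s → Fin n, (∀ a, E (g a) (g (a + 1))) ∧
      (∀ a, (∃ p, HasWalk E i (g a) p) ∧ ∃ q, HasWalk E (g a) i q) ∧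
      ∀ a t, 0 < t → HasWalk E (g a) (g a) t → s ≤ t := by
  set S : Set ℕ :=
    {t | 0 < t ∧ ∃ x, (∃ p, HasWalk E i x p) ∧ (∃ q, HasWalk E x i q) ∧ HasWalk E x x t}
  have hS : S.Nonempty :=
    ⟨t₀, ht₀, i, ⟨0, hasWalk_zero_iff.mpr rfl⟩, ⟨0, hasWalk_zero_iff.mpr rfl⟩, h⟩
  obtain ⟨hs, w, ⟨p, hiw⟩, ⟨q, hwi⟩, hw⟩ := Nat.sInf_mem hS
  have : NeZero (sInf S) := ⟨hs.ne'⟩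
  obtain ⟨g, rfl, hg⟩ := hw.exists_cycle
  have hscc : ∀ a, (∃ p, HasWalk E i (g a) p) ∧ ∃ q, HasWalk E (g a) i q := fun a =>
    ⟨⟨_, hiw.append (hasWalk_cycle_sub hg 0 a)⟩,
      ⟨_, (hasWalk_cycle_sub hg a 0).append hwi⟩⟩
  exact ⟨_, hs, g, hg, hscc, fun a t ht hw =>
    Nat.sInf_le ⟨ht, g a, (hscc a).1, (hscc a).2, hw⟩⟩

theorem AperiodicAt.exists_near_short_cycle {i : Fin n} (hap : AperiodicAt E i) :
    ∃ c s p q, 0 < s ∧ p + s ≤ n ∧ (s < n ∨ n = 1) ∧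
      HasWalk E i c p ∧ HasWalk E c i q ∧ HasWalk E c c s := by
  obtain ⟨N, hN⟩ := hap.exists_forall_ge_hasWalk
  obtain ⟨s, hs, g, hg, hscc, hmin⟩ := (hN (N + 1) (by omega)).exists_shortest_cycle (by omega)
  have : NeZero s := ⟨hs.ne'⟩
  have hinj := injective_of_shortest_cycle hg hmin
  obtain ⟨⟨_, hi⟩, -⟩ := hscc 0
  obtain ⟨c, hc, p, hps, hic⟩ :=
    hi.exists_mem_add_card_le (Finset.univ.image g) (Finset.mem_image_of_mem g (Finset.mem_univ 0))
  rw [Finset.card_image_of_injective _ hinj, Finset.card_univ, ZMod.card] at hps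
  obtain ⟨a, -, rfl⟩ := Finset.mem_image.mp hc
  obtain ⟨q, hci⟩ := (hscc a).2
  refine ⟨g a, s, p, q, hs, hps, ?_, hic, hci, by simpa using hasWalk_cycle_add hg a s⟩
  refine (show s ≤ n by omega).lt_or_eq.imp id fun hsn => ?_
  have hbij : Function.Bijective g :=
    (Fintype.bijective_iff_injective_and_card g).mpr ⟨hinj, by simp [ZMod.card, hsn]⟩
  exact hsn ▸ eq_one_of_shortest_cycle_of_bijective hg hmin hbij hap

theorem AperiodicAt.hasWalk_self {i : Fin n} (hap : AperiodicAt E i) {m : ℕ}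
    (hm : n ^ 2 + 2 ≤ m + 2 * n) : HasWalk E i i m := by
  obtain ⟨N, hN⟩ := hap.exists_forall_ge_hasWalk
  obtain ⟨c, s, p, q, hs, hps, hsn, hic, hci, hcc⟩ := hap.exists_near_short_cycle
  have hlen : p + (n - 1) * s ≤ m := by
    rcases hsn with hsn | rfl
    · obtain ⟨k, rfl⟩ : ∃ k, n = k + 2 := ⟨n - 2, by omega⟩
      have : k * s ≤ k * (k + 1) := Nat.mul_le_mul_left k (by omega)
      rw [show k + 2 - 1 = k + 1 by omega]
      nlinarith
    · simp only [Nat.sub_self, zero_mul]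
      omega
  obtain ⟨r, rfl⟩ : ∃ r, m = p + (r + (n - 1) * s) := ⟨m - (p + (n - 1) * s), by omega⟩
  have hlong : HasWalk E c i (r + (q + N) * s) := by
    have : q + N ≤ (q + N) * s := Nat.le_mul_of_pos_right _ hs
    exact (hci.append (hN (r + (q + N) * s - q) (by omega))).of_length_eq (by omega)
  exact hic.append (hcc.of_add_mul_of_loop hlong)

end Digraph

section Products

variable {n : ℕ} {A : ℕ → Matrix (Fin n) (Fin n) ℝ}

theorem mul_apply_pos_of_nonneg {M N : Matrix (Fin n) (Fin n) ℝ} (hM : ∀ a b, 0 ≤ M a b)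
    (hN : ∀ a b, 0 ≤ N a b) {i x j : Fin n} (hix : 0 < M i x) (hxj : 0 < N x j) :
    0 < (M * N) i j :=
  Finset.sum_pos' (fun y _ => mul_nonneg (hM i y) (hN y j))
    ⟨x, Finset.mem_univ x, mul_pos hix hxj⟩

theorem backProd_add (l m : ℕ) : backProd A 0 (l + m) = backProd A l m * backProd A 0 l := by
  induction m with
  | zero => simp [backProd]
  | succ m ih => rw [← add_assoc, backProd, backProd, ih, zero_add, Matrix.mul_assoc]

variable (hA : ∀ k, 1 ≤ k → ∀ i j, 0 ≤ A k i j)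
include hA

theorem backProd_nonneg (l m : ℕ) (i j : Fin n) : 0 ≤ backProd A l m i j := by
  induction m generalizing i j with
  | zero => by_cases h : i = j <;> simp [backProd, Matrix.one_apply, h]
  | succ m ih =>
    rw [backProd, Matrix.mul_apply]
    exact Finset.sum_nonneg fun x _ => mul_nonneg (hA (l + m + 1) (by omega) _ _) (ih _ _)

theorem backProd_pos_of_hasWalk {H : Fin n → Fin n → Prop}
    (hsub : ∀ k, 1 ≤ k → ∀ i j, H i j → 0 < A k i j) (l : ℕ) {m : ℕ} {u v : Fin n}
    (h : HasWalk H u v m) : 0 < backProd A l m u v := by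
  induction m generalizing u with
  | zero =>
    obtain rfl := hasWalk_zero_iff.mp h
    simp [backProd]
  | succ m ih =>
    obtain ⟨x, hux, hxv⟩ := (h.of_length_eq (add_comm m 1)).split
    exact mul_apply_pos_of_nonneg (hA _ (by omega)) (backProd_nonneg hA l m)
      (hsub _ (by omega) _ _ (hasWalk_one_iff.mp hux)) (ih hxv)

end Products

theorem stmt12_general {n : ℕ} (A : ℕ → Matrix (Fin n) (Fin n) ℝ)
    (H : Fin n → Fin n → Prop)
    (hA : ∀ k, 1 ≤ k → Stochastic (A k))
    (hsub : ∀ k, 1 ≤ k → ∀ i j, H i j → 0 < A k i j)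
    (hap : ∀ i : Fin n, AperiodicAt H i)
    (l k : ℕ) (hlk : l ≤ k) (hW : n ^ 2 + 2 ≤ (k - l) + 2 * n)
    (j i : Fin n) (hpos : 0 < backProd A 0 l i j) :
    0 < backProd A 0 k i j := by
  have hnonneg : ∀ k, 1 ≤ k → ∀ i j, 0 ≤ A k i j := fun k hk => (hA k hk).1
  obtain ⟨m, rfl⟩ := Nat.exists_eq_add_of_le hlk
  have hloop : HasWalk H i i m := (hap i).hasWalk_self (by simpa using hW)
  rw [backProd_add]
  exact mul_apply_pos_of_nonneg (backProd_nonneg hnonneg l m) (backProd_nonneg hnonneg 0 l)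
    (backProd_pos_of_hasWalk hnonneg hsub l hloop) hpos

theorem stmt12 {n : ℕ} (A : ℕ → Matrix (Fin n) (Fin n) ℝ)
    (H : Fin n → Fin n → Prop)
    (hA : ∀ k, 1 ≤ k → Stochastic (A k))
    (hsub : ∀ k, 1 ≤ k → ∀ i j, H i j → 0 < A k i j)
    (hns : ∀ i : Fin n, ∃ j, H i j)
    (hap : ∀ i : Fin n, AperiodicAt H i)
    (l k : ℕ) (hlk : l ≤ k) (hW : n ^ 2 + 2 ≤ (k - l) + 2 * n)
    (j i : Fin n) (hpos : 0 < backProd A 0 l i j) :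
    0 < backProd A 0 k i j :=
  stmt12_general A H hA hsub hap l k hlk hW j i hpos
end

section
/- Let A(k) be completely reducible row-stochastic n×n matrices, P(k) = A(k)···A(1), S_j(k) = {i : P(k)_{i,j} > 0}, and μ_j(k) = min{P(k)_{i,j} : i ∈ S_j(k)}. If S_j(k) = S_j(k+1), then μ_j(k+1) ≥ μ_j(k). -/
open Matrix Filter

theorem stmt13 {n : ℕ} (A : ℕ → Matrix (Fin n) (Fin n) ℝ)
    (hA : ∀ k, 1 ≤ k → Stochastic (A k) ∧ CompRed (A k))
    (k : ℕ) (j : Fin n)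
    (hS : ∀ i, 0 < backProd A 0 k i j ↔ 0 < backProd A 0 (k + 1) i j) :
    mu (backProd A 0 k) j ≤ mu (backProd A 0 (k + 1)) j := by

  classical
  set P := backProd A 0 k with hPdef
  have hQeq : backProd A 0 (k + 1) = A (k + 1) * P := by
    show backProd A 0 (k+1) = _
    simp [backProd, hPdef]
  set Q := backProd A 0 (k + 1) with hQdef
  -- nonnegativity of backProd entries
  have hPnn : ∀ m (a b : Fin n), 0 ≤ backProd A 0 m a b := by
    intro m
    induction m with
    | zero => intro a b; simp [backProd, Matrix.one_apply]; positivity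
    | succ m ih =>
      intro a b
      show 0 ≤ (A (0 + m + 1) * backProd A 0 m) a b
      rw [Matrix.mul_apply]
      apply Finset.sum_nonneg
      intro l _
      exact mul_nonneg ((hA (0 + m + 1) (by omega)).1.1 a l) (ih l b)
  have hPnn' : ∀ a b, 0 ≤ P a b := hPnn k
  obtain ⟨hAst, hAcr⟩ := hA (k + 1) (by omega)
  have hAnn := hAst.1
  -- closure: an edge into S stays in S
  have hclose : ∀ a b, 0 < A (k + 1) a b → 0 < P b j → 0 < P a j := by
    intro a b hab hb
    rw [hS a, show Q = A (k+1) * P from hQeq, Matrix.mul_apply]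
    have : 0 < A (k + 1) a b * P b j := mul_pos hab hb
    refine lt_of_lt_of_le this ?_
    refine Finset.single_le_sum (f := fun l => A (k + 1) a l * P l j) ?_ (Finset.mem_univ b)
    intro l _
    exact mul_nonneg (hAnn a l) (hPnn' l j)
  by_cases hne : ∃ i, 0 < P i j
  · obtain ⟨i0, hi0⟩ := hne
    have hfin : {v : ℝ | ∃ i, 0 < P i j ∧ P i j = v}.Finite :=
      Set.Finite.subset (Set.finite_range fun i => P i j)
        (by rintro v ⟨i, _, rfl⟩; exact ⟨i, rfl⟩)
    have hbdd : BddBelow {v : ℝ | ∃ i, 0 < P i j ∧ P i j = v} := hfin.bddBelow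
    set μ := mu P j with hmu
    have hμle : ∀ l, 0 < P l j → μ ≤ P l j := fun l hl => csInf_le hbdd ⟨l, hl, rfl⟩
    -- key: positive Q entries are ≥ μ
    have hkey : ∀ i, 0 < Q i j → μ ≤ Q i j := by
      intro i hi
      have hiS : 0 < P i j := (hS i).mpr hi
      have hterm : ∀ l, μ * A (k + 1) i l ≤ A (k + 1) i l * P l j := by
        intro l
        rcases eq_or_lt_of_le (hAnn i l) with h0 | hpos
        · rw [← h0]; simp
        · have : 0 < P l j := by
            obtain ⟨m, f, hf0, hfm, hstep⟩ := hAcr i l hpos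
            have hwalk : ∀ t, t ≤ m → 0 < P (f (m - t)) j := by
              intro t
              induction t with
              | zero => intro _; simpa [hfm] using hiS
              | succ t iht =>
                intro ht
                have h1 : m - (t + 1) + 1 = m - t := by omega
                have hedge := hstep (m - (t + 1)) (by omega)
                rw [h1] at hedge
                exact hclose _ _ hedge (iht (by omega))
            have := hwalk m le_rfl
            simpa [hf0] using this
          calc μ * A (k + 1) i l ≤ P l j * A (k + 1) i l :=
                mul_le_mul_of_nonneg_right (hμle l this) (hAnn i l)
            _ = A (k + 1) i l * P l j := mul_comm _ _
      have hsum : μ ≤ ∑ l, A (k + 1) i l * P l j := by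
        calc μ = μ * ∑ l, A (k + 1) i l := by rw [hAst.2 i, mul_one]
          _ = ∑ l, μ * A (k + 1) i l := by rw [Finset.mul_sum]
          _ ≤ ∑ l, A (k + 1) i l * P l j := Finset.sum_le_sum fun l _ => hterm l
      rw [show Q = A (k+1) * P from hQeq, Matrix.mul_apply]
      exact hsum
    have hQne : 0 < Q i0 j := (hS i0).mp hi0
    show μ ≤ sInf {v : ℝ | ∃ i, 0 < Q i j ∧ Q i j = v}
    refine le_csInf ⟨Q i0 j, i0, hQne, rfl⟩ ?_
    rintro v ⟨i, hi, rfl⟩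
    exact hkey i hi
  · have hQe : ¬∃ i, 0 < Q i j := by
      rintro ⟨i, hi⟩; exact hne ⟨i, (hS i).mpr hi⟩
    have h1 : {v : ℝ | ∃ i, 0 < P i j ∧ P i j = v} = ∅ := by
      ext v; simp only [Set.mem_setOf_eq, Set.mem_empty_iff_false, iff_false]
      rintro ⟨i, hi, _⟩; exact hne ⟨i, hi⟩
    have h2 : {v : ℝ | ∃ i, 0 < Q i j ∧ Q i j = v} = ∅ := by
      ext v; simp only [Set.mem_setOf_eq, Set.mem_empty_iff_false, iff_false]
      rintro ⟨i, hi, _⟩; exact hQe ⟨i, hi⟩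
    simp only [mu, h1, h2, Real.sInf_empty, le_refl]
end
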